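/- Let L ≥ 1 and let h, g ∈ ℂ^L with h ≠ 0 and with g not a scalar multiple of h. Perform Gram–Schmidt orthogonalization: q₁ = ‖h‖⁻¹ • h, r₁₂ = ⟪q₁, g⟫, v = g − r₁₂ • q₁, r₂₂ = ‖v‖ (which is positive), q₂ = r₂₂⁻¹ • v, and let φ = arg⟪h, g⟫. Define w ∈ ℂ^L by w_l = (1/√2)·(exp(−iφ)·conj(q₁ l) + i·conj(q₂ l)). Then Σ_l g_l·w_l = (1/√2)·(|r₁₂| + i·r₂₂); in particular |Σ_l g_l·w_l|² = (|r₁₂|² + r₂₂²)/2 = ‖g‖²/2. (Identity (30)–(31) in the proof of Proposition 2.) -/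

import Mathlib

/-!
Since `Σ_l g_l · conj (q l) = ⟪q, g⟫`, the sum `g^T w` equals
`(e^{-iφ} ⟪q₁, g⟫ + i ⟪q₂, g⟫) / √2`. The residual `v = g - r₁₂ q₁` is orthogonal to the unit
vector `q₁`, so `⟪q₂, g⟫ = ‖v‖⁻¹ ⟪v, v⟫ = r₂₂`, and Pythagoras gives `‖g‖² = |r₁₂|² + r₂₂²`.
Finally `r₁₂ = ‖h‖⁻¹ ⟪h, g⟫` has argument `φ`, so the phase `e^{-iφ}` turns it into `|r₁₂|`.
-/

open Complex
open scoped InnerProductSpace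

section GramSchmidtStep

variable {𝕜 E : Type*} [RCLike 𝕜] [NormedAddCommGroup E] [InnerProductSpace 𝕜 E]

theorem inner_sub_inner_smul_left_eq_zero {q : E} (hq : ‖q‖ = 1) (g : E) :
    ⟪g - ⟪q, g⟫_𝕜 • q, q⟫_𝕜 = 0 := by
  rw [inner_sub_left, inner_smul_left, inner_conj_symm, inner_self_eq_norm_sq_to_K, hq]
  simp

theorem inner_sub_inner_smul_left_eq_norm_sq {q : E} (hq : ‖q‖ = 1) (g : E) :
    ⟪g - ⟪q, g⟫_𝕜 • q, g⟫_𝕜 = (‖g - ⟪q, g⟫_𝕜 • q‖ : 𝕜) ^ 2 := by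
  have hsplit : ⟪g - ⟪q, g⟫_𝕜 • q, g⟫_𝕜 =
      ⟪g - ⟪q, g⟫_𝕜 • q, g - ⟪q, g⟫_𝕜 • q⟫_𝕜 + ⟪q, g⟫_𝕜 * ⟪g - ⟪q, g⟫_𝕜 • q, q⟫_𝕜 := by
    rw [← inner_smul_right, ← inner_add_right, sub_add_cancel]
  rw [hsplit, inner_sub_inner_smul_left_eq_zero hq, mul_zero, add_zero,
    inner_self_eq_norm_sq_to_K]

theorem inner_inv_norm_smul_sub_inner_smul {q : E} (hq : ‖q‖ = 1) (g : E) :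
    ⟪(‖g - ⟪q, g⟫_𝕜 • q‖ : 𝕜)⁻¹ • (g - ⟪q, g⟫_𝕜 • q), g⟫_𝕜 = ‖g - ⟪q, g⟫_𝕜 • q‖ := by
  rw [inner_smul_left, inner_sub_inner_smul_left_eq_norm_sq hq, map_inv₀, RCLike.conj_ofReal, sq,
    ← mul_assoc, inv_mul_mul_self]

theorem norm_sq_eq_norm_inner_sq_add_norm_sub_inner_smul_sq {q : E} (hq : ‖q‖ = 1) (g : E) :
    ‖g‖ ^ 2 = ‖⟪q, g⟫_𝕜‖ ^ 2 + ‖g - ⟪q, g⟫_𝕜 • q‖ ^ 2 := by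
  have h := norm_add_sq_eq_norm_sq_add_norm_sq_of_inner_eq_zero (𝕜 := 𝕜) (g - ⟪q, g⟫_𝕜 • q)
    (⟪q, g⟫_𝕜 • q) (by rw [inner_smul_right, inner_sub_inner_smul_left_eq_zero hq, mul_zero])
  rw [sub_add_cancel, norm_smul, hq, mul_one] at h
  nlinarith [h]

end GramSchmidtStep

theorem Complex.arg_inner_inv_norm_smul {E : Type*} [NormedAddCommGroup E]
    [InnerProductSpace ℂ E] {h : E} (hh : h ≠ 0) (g : E) :
    arg ⟪(‖h‖ : ℂ)⁻¹ • h, g⟫_ℂ = arg ⟪h, g⟫_ℂ := by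
  rw [inner_smul_left, map_inv₀, conj_ofReal, ← ofReal_inv,
    arg_real_mul _ (inv_pos.mpr (norm_pos_iff.mpr hh))]

theorem Complex.exp_neg_I_mul_arg_mul (z : ℂ) : exp (-(I * arg z)) * z = ‖z‖ := by
  calc exp (-(I * arg z)) * z = exp (-(I * arg z)) * (‖z‖ * exp (arg z * I)) := by
        rw [norm_mul_exp_arg_mul_I]
    _ = ‖z‖ := by rw [mul_left_comm, ← exp_add, mul_comm I, neg_add_cancel, exp_zero, mul_one]

theorem Complex.sq_norm_inv_sqrt_two_mul_add_I_mul (x y : ℝ) :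
    ‖(Real.sqrt 2 : ℂ)⁻¹ * (x + I * y)‖ ^ 2 = (x ^ 2 + y ^ 2) / 2 := by
  rw [norm_mul, norm_inv, norm_real, Real.norm_of_nonneg (Real.sqrt_nonneg 2), mul_comm I,
    norm_add_mul_I, mul_pow, inv_pow, Real.sq_sqrt (by norm_num), Real.sq_sqrt (by positivity)]
  ring

theorem EuclideanSpace.sum_mul_conj_eq_inner {𝕜 ι : Type*} [RCLike 𝕜] [Fintype ι]
    (x y : EuclideanSpace 𝕜 ι) : ∑ l, y l * starRingEnd 𝕜 (x l) = ⟪x, y⟫_𝕜 := rfl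

theorem EuclideanSpace.sum_mul_conj_comb {𝕜 ι : Type*} [RCLike 𝕜] [Fintype ι]
    (x₁ x₂ y : EuclideanSpace 𝕜 ι) (c a b : 𝕜) :
    ∑ l, y l * (c * (a * starRingEnd 𝕜 (x₁ l) + b * starRingEnd 𝕜 (x₂ l))) =
      c * (a * ⟪x₁, y⟫_𝕜 + b * ⟪x₂, y⟫_𝕜) := by
  simp only [← sum_mul_conj_eq_inner, Finset.mul_sum, ← Finset.sum_add_distrib]
  exact Finset.sum_congr rfl fun l _ => by ring

theorem pr_beamforming_g_component_general
    (L : ℕ) (h g : EuclideanSpace ℂ (Fin L))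
    (hh : h ≠ 0)
    (q₁ q₂ v w : EuclideanSpace ℂ (Fin L)) (r₁₂ : ℂ) (r₂₂ φ : ℝ)
    (hq₁ : q₁ = (‖h‖ : ℂ)⁻¹ • h)
    (hr₁₂ : r₁₂ = (inner ℂ q₁ g : ℂ))
    (hv : v = g - r₁₂ • q₁)
    (hr₂₂ : r₂₂ = ‖v‖)
    (hq₂ : q₂ = (r₂₂ : ℂ)⁻¹ • v)
    (hφ : φ = Complex.arg (inner ℂ h g : ℂ))
    (hw : ∀ l, w l = (Real.sqrt 2 : ℂ)⁻¹ *
      (Complex.exp (-(Complex.I * φ)) * (starRingEnd ℂ) (q₁ l) +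
        Complex.I * (starRingEnd ℂ) (q₂ l))) :
    (∑ l, g l * w l) = (Real.sqrt 2 : ℂ)⁻¹ * ((‖r₁₂‖ : ℂ) + Complex.I * (r₂₂ : ℂ)) ∧
      ‖∑ l, g l * w l‖ ^ 2 = (‖r₁₂‖ ^ 2 + r₂₂ ^ 2) / 2 ∧
      ‖∑ l, g l * w l‖ ^ 2 = ‖g‖ ^ 2 / 2 := by
  have hq₁_norm : ‖q₁‖ = 1 := hq₁ ▸ norm_smul_inv_norm hh
  have hq₂g : ⟪q₂, g⟫_ℂ = r₂₂ := by
    rw [hq₂, hr₂₂, hv, hr₁₂]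
    exact inner_inv_norm_smul_sub_inner_smul hq₁_norm g
  have hphase : exp (-(I * φ)) * r₁₂ = ‖r₁₂‖ := by
    rw [hφ, ← arg_inner_inv_norm_smul hh, ← hq₁, ← hr₁₂, exp_neg_I_mul_arg_mul]
  have hsum : ∑ l, g l * w l = (Real.sqrt 2 : ℂ)⁻¹ * (‖r₁₂‖ + I * r₂₂) := by
    rw [Finset.sum_congr rfl fun l _ => by rw [hw l], EuclideanSpace.sum_mul_conj_comb, ← hr₁₂,
      hphase, hq₂g]
  have hnorm_sq := sq_norm_inv_sqrt_two_mul_add_I_mul ‖r₁₂‖ r₂₂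
  refine ⟨hsum, hsum ▸ hnorm_sq, ?_⟩
  rw [hsum, hnorm_sq, norm_sq_eq_norm_inner_sq_add_norm_sub_inner_smul_sq (𝕜 := ℂ) hq₁_norm g,
    ← hr₁₂, ← hv, ← hr₂₂]

/-- Identity (30)–(31) in the proof of Proposition 2:
`g^T w = (1/√2)·(|r₁₂| + i·r₂₂)`, hence `|g^T w|² = (|r₁₂|² + r₂₂²)/2 = ‖g‖²/2`. -/
theorem pr_beamforming_g_component
    (L : ℕ) (hL : 1 ≤ L) (h g : EuclideanSpace ℂ (Fin L))
    (hh : h ≠ 0) (hg : ∀ c : ℂ, g ≠ c • h)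
    (q₁ q₂ v w : EuclideanSpace ℂ (Fin L)) (r₁₂ : ℂ) (r₂₂ φ : ℝ)
    (hq₁ : q₁ = (‖h‖ : ℂ)⁻¹ • h)
    (hr₁₂ : r₁₂ = (inner ℂ q₁ g : ℂ))
    (hv : v = g - r₁₂ • q₁)
    (hr₂₂ : r₂₂ = ‖v‖)
    (hr₂₂pos : 0 < r₂₂)
    (hq₂ : q₂ = (r₂₂ : ℂ)⁻¹ • v)
    (hφ : φ = Complex.arg (inner ℂ h g : ℂ))
    (hw : ∀ l, w l = (Real.sqrt 2 : ℂ)⁻¹ *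
      (Complex.exp (-(Complex.I * φ)) * (starRingEnd ℂ) (q₁ l) +
        Complex.I * (starRingEnd ℂ) (q₂ l))) :
    (∑ l, g l * w l) = (Real.sqrt 2 : ℂ)⁻¹ * ((‖r₁₂‖ : ℂ) + Complex.I * (r₂₂ : ℂ)) ∧
      ‖∑ l, g l * w l‖ ^ 2 = (‖r₁₂‖ ^ 2 + r₂₂ ^ 2) / 2 ∧
      ‖∑ l, g l * w l‖ ^ 2 = ‖g‖ ^ 2 / 2 :=
  pr_beamforming_g_component_general L h g hh q₁ q₂ v w r₁₂ r₂₂ φ hq₁ hr₁₂ hv hr₂₂ hq₂ hφ hw
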